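/- arXiv:2205.13753 — 6 statements merged into one kernel-verified Lean document; each statement's English description precedes it below -/
import Mathlib

section
/- Let d ≥ 1, δ, r > 0, let M be a real symmetric d×d matrix with quadratic form f(x) = (1/2)·xᵀMx, and let S ⊆ ℝ^d be a nonempty closed linear cone. Assume 0 is not a (δ,r)-boundary QCSP, i.e. f(x) ≥ -δ for every x ∈ ∂S with ‖x‖ ≤ r. Then the following are equivalent: (1) there exists x ∈ S with ‖x‖ ≤ r and f(x) < -δ; (2) there exists e ∈ int S with ‖e‖ = r, f(e) < -δ, and e is an eigenvector of M (i.e. Me = λe for some λ ∈ ℝ). -/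
/-!
Minimize `f` over the compact set `S ∩ B(r)`. The minimum is `< -δ`, so by the boundary
hypothesis the minimizer `e` lies in `int S`. Since `f` is 2-homogeneous and negative at `e`,
rescaling `e` to radius `r` inside the cone can only lower `f`, so `‖e‖ = r`. Being interior,
`e` is then a local minimizer of the quadratic form on the sphere of radius `r`, and the
Lagrange condition for the Rayleigh quotient makes it an eigenvector of `M`.
-/

open scoped RealInnerProductSpace
open Metric Topology

section Cone

variable {E : Type*} [NormedAddCommGroup E] [InnerProductSpace ℝ E]

theorem norm_eq_of_isMinOn_cone_inter_closedBall (T : E →L[ℝ] E) {S : Set E}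
    (hS : ∀ x ∈ S, ∀ α : ℝ, 0 ≤ α → α • x ∈ S) {r : ℝ} {e : E}
    (he : e ∈ S ∩ closedBall 0 r) (hmin : IsMinOn T.reApplyInnerSelf (S ∩ closedBall 0 r) e)
    (hneg : T.reApplyInnerSelf e < 0) : ‖e‖ = r := by
  have her : ‖e‖ ≤ r := mem_closedBall_zero_iff.mp he.2
  have hne : e ≠ 0 := by rintro rfl; simp [T.reApplyInnerSelf_apply] at hneg
  have hpos : 0 < ‖e‖ := norm_pos_iff.mpr hne
  set t := r / ‖e‖
  have ht : 1 ≤ t := (one_le_div hpos).mpr her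
  have hte : t • e ∈ S ∩ closedBall 0 r := by
    refine ⟨hS e he.1 t (by positivity), mem_closedBall_zero_iff.mpr (le_of_eq ?_)⟩
    rw [norm_smul, Real.norm_of_nonneg (by positivity), div_mul_cancel₀ _ hpos.ne']
  have hle : T.reApplyInnerSelf e ≤ t ^ 2 * T.reApplyInnerSelf e := by
    simpa [T.reApplyInnerSelf_smul, sq_abs] using hmin hte
  have ht2 : t ^ 2 ≤ 1 := by nlinarith
  have : t = 1 := le_antisymm (by nlinarith) ht
  rwa [div_eq_one_iff_eq hpos.ne', eq_comm] at this

theorem hasEigenvector_of_isMinOn_of_mem_interior [CompleteSpace E] {T : E →L[ℝ] E}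
    (hT : IsSelfAdjoint T) {S : Set E} {e : E} (he : e ∈ interior S) (hne : e ≠ 0)
    (hmin : IsMinOn T.reApplyInnerSelf (S ∩ closedBall 0 ‖e‖) e) :
    Module.End.HasEigenvector (T : E →ₗ[ℝ] E) (T.rayleighQuotient e) e := by
  have hnhds : S ∩ closedBall 0 ‖e‖ ∈ 𝓝[sphere 0 ‖e‖] e :=
    mem_nhdsWithin.mpr ⟨interior S, isOpen_interior, he,
      fun _ hy ↦ ⟨interior_subset hy.1, sphere_subset_closedBall hy.2⟩⟩
  exact hT.hasEigenvector_of_isLocalExtrOn hne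
    (Or.inl (hmin.localize.filter_mono (nhdsWithin_le_of_mem hnhds)))

theorem exists_mem_interior_hasEigenvector_of_reApplyInnerSelf_lt [ProperSpace E]
    {T : E →L[ℝ] E} (hT : IsSelfAdjoint T) {S : Set E} (hScl : IsClosed S)
    (hS : ∀ x ∈ S, ∀ α : ℝ, 0 ≤ α → α • x ∈ S) {c r : ℝ} (hc : c ≤ 0)
    (hbd : ∀ x ∈ frontier S, ‖x‖ ≤ r → c ≤ T.reApplyInnerSelf x) {x : E} (hx : x ∈ S)
    (hxr : ‖x‖ ≤ r) (hxc : T.reApplyInnerSelf x < c) :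
    ∃ e ∈ interior S, ‖e‖ = r ∧ T.reApplyInnerSelf e < c ∧
      Module.End.HasEigenvector (T : E →ₗ[ℝ] E) (T.rayleighQuotient e) e := by
  have hxK : x ∈ S ∩ closedBall 0 r := ⟨hx, mem_closedBall_zero_iff.mpr hxr⟩
  obtain ⟨e, heK, hmin⟩ := ((isCompact_closedBall 0 r).inter_left hScl).exists_isMinOn
    ⟨x, hxK⟩ T.reApplyInnerSelf_continuous.continuousOn
  have hec : T.reApplyInnerSelf e < c := (hmin hxK).trans_lt hxc
  have heInt : e ∈ interior S := by
    by_contra h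
    exact (hbd e ⟨subset_closure heK.1, h⟩ (mem_closedBall_zero_iff.mp heK.2)).not_gt hec
  have hne : e ≠ 0 := by
    rintro rfl
    simp [T.reApplyInnerSelf_apply] at hec
    linarith
  have hnorm := norm_eq_of_isMinOn_cone_inter_closedBall T hS heK hmin (hec.trans_le hc)
  exact ⟨e, heInt, hnorm, hec, hasEigenvector_of_isMinOn_of_mem_interior hT heInt hne
    (hnorm ▸ hmin)⟩

end Cone

theorem stmt0_general (d : ℕ) (δ r : ℝ) (hδ : 0 < δ)
    (M : Matrix (Fin d) (Fin d) ℝ) (hM : M.IsSymm)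
    (f : EuclideanSpace ℝ (Fin d) → ℝ)
    (hf : ∀ x : EuclideanSpace ℝ (Fin d),
      f x = (1 / 2) * ⟪x, (WithLp.toLp 2 (M.mulVec x) : EuclideanSpace ℝ (Fin d))⟫)
    (S : Set (EuclideanSpace ℝ (Fin d))) (hScl : IsClosed S)
    (hScone : ∀ x ∈ S, ∀ α : ℝ, 0 ≤ α → α • x ∈ S)
    (hbd : ∀ x ∈ frontier S, ‖x‖ ≤ r → f x ≥ -δ) :
    (∃ x ∈ S, ‖x‖ ≤ r ∧ f x < -δ) ↔
      (∃ e ∈ interior S, ‖e‖ = r ∧ f e < -δ ∧ ∃ μ : ℝ, M.mulVec e = μ • e) := by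
  set T := Matrix.toEuclideanCLM (𝕜 := ℝ) M
  have hT : IsSelfAdjoint T := (Matrix.isHermitian_iff_isSymm.mpr hM).isSelfAdjoint.map _
  have hfT : ∀ x, f x = T.reApplyInnerSelf x / 2 := fun x ↦ by
    rw [hf, T.reApplyInnerSelf_apply, RCLike.re_to_real, real_inner_comm, one_div_mul_eq_div]
    rfl
  constructor
  · rintro ⟨x, hx, hxr, hxf⟩
    obtain ⟨e, he, her, hec, heig⟩ :=
      exists_mem_interior_hasEigenvector_of_reApplyInnerSelf_lt hT hScl hScone
        (c := -(2 * δ)) (by linarith) (fun y hy hyr ↦ by linarith [hbd y hy hyr, hfT y])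
        hx hxr (by linarith [hfT x])
    exact ⟨e, he, her, by linarith [hfT e], _, congrArg WithLp.ofLp heig.apply_eq_smul⟩
  · rintro ⟨e, he, her, hef, -⟩
    exact ⟨e, interior_subset he, her.le, hef⟩

/-- For a quadratic form `f(x) = (1/2) xᵀ M x` with symmetric `M`, a nonempty
closed linear cone `S`, if `0` is not a `(δ, r)`-boundary QCSP (i.e. `f ≥ -δ` on
`∂S ∩ B(r)`), then `0` is a `(δ, r)`-QCSP iff there is an eigenvector `e` of `M`
in `int S` with `‖e‖ = r` and `f(e) < -δ`. -/
theorem stmt0 (d : ℕ) (hd : 1 ≤ d) (δ r : ℝ) (hδ : 0 < δ) (hr : 0 < r)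
    (M : Matrix (Fin d) (Fin d) ℝ) (hM : M.IsSymm)
    (f : EuclideanSpace ℝ (Fin d) → ℝ)
    (hf : ∀ x : EuclideanSpace ℝ (Fin d),
      f x = (1 / 2) * ⟪x, (WithLp.toLp 2 (M.mulVec x) : EuclideanSpace ℝ (Fin d))⟫)
    (S : Set (EuclideanSpace ℝ (Fin d))) (hSne : S.Nonempty) (hScl : IsClosed S)
    (hScone : ∀ x ∈ S, ∀ α : ℝ, 0 ≤ α → α • x ∈ S)
    (hbd : ∀ x ∈ frontier S, ‖x‖ ≤ r → f x ≥ -δ) :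
    (∃ x ∈ S, ‖x‖ ≤ r ∧ f x < -δ) ↔
      (∃ e ∈ interior S, ‖e‖ = r ∧ f e < -δ ∧ ∃ μ : ℝ, M.mulVec e = μ • e) :=
  stmt0_general d δ r hδ M hM f hf S hScl hScone hbd
end

section
/- Let d ≥ 1, δ, r > 0, let M be a real symmetric d×d matrix with quadratic form f(x) = (1/2)·xᵀMx, and let S ⊆ ℝ^d be a nonempty closed linear cone. Let x̂ ∈ ℝ^d with ‖x̂‖ = r and f(x̂) < -δ. If (1) there exists x ∈ S with ‖x‖ ≤ r and f(x) < -δ, and (2) f(x) ≥ -δ for every x ∈ ∂S with ‖x‖ ≤ r, then either x̂ ∈ S or -x̂ ∈ S. -/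
/-!
The quadratic form `Q y = f y + (δ / r²) ‖y‖²` agrees with `f + δ` on the sphere of radius `r`,
is negative at `x̂` and at the given point `x₀ ∈ S`, and negative on the segment from `x₀` to
whichever of `±x̂` makes `polar Q x₀ (±x̂) ≤ 0`. Projecting that segment radially onto the sphere
gives a connected set through a point of `S` on which `f < -δ`, so it misses `∂S` and hence stays
in `S`; it ends at `±x̂`.
-/

open scoped RealInnerProductSpace

open Set QuadraticMap

theorem IsPreconnected.subset_of_disjoint_frontier {X : Type*} [TopologicalSpace X]
    {K S : Set X} (hK : IsPreconnected K) (hKS : Disjoint K (frontier S))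
    (hne : (K ∩ S).Nonempty) : K ⊆ S := by
  have hcover : K ⊆ interior S ∪ (closure S)ᶜ := fun y hy => by
    by_cases hy' : y ∈ closure S
    · exact .inl (closure_sdiff_frontier S ▸ ⟨hy', hKS.notMem_of_mem_left hy⟩)
    · exact .inr hy'
  obtain ⟨y, hyK, hyS⟩ := hne
  have hy : y ∈ interior S := by
    rw [← self_sdiff_frontier]; exact ⟨hyS, hKS.notMem_of_mem_left hyK⟩
  refine (hK.subset_left_of_subset_union isOpen_interior isClosed_closure.isOpen_compl ?_ hcover
    ⟨y, hyK, hy⟩).trans interior_subset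
  exact disjoint_compl_right.mono_right (compl_subset_compl.2 interior_subset_closure)

theorem QuadraticMap.map_smul_add_smul {R M N : Type*} [CommRing R] [AddCommGroup M]
    [Module R M] [AddCommGroup N] [Module R N] (Q : QuadraticMap R M N) (a b : R) (x y : M) :
    Q (a • x + b • y) = (a * a) • Q x + (b * b) • Q y + (a * b) • polar Q x y := by
  rw [QuadraticMap.map_add (⇑Q), Q.map_smul, Q.map_smul, polar_smul_left, polar_smul_right,
    smul_smul]

theorem QuadraticMap.segment_subset_of_polar_nonpos {R M : Type*} [Field R] [LinearOrder R]
    [IsStrictOrderedRing R] [AddCommGroup M] [Module R M] (Q : QuadraticMap R M R) {x y : M}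
    (hx : Q x < 0) (hy : Q y < 0) (hxy : polar Q x y ≤ 0) :
    segment R x y ⊆ {z | Q z < 0} := by
  rintro _ ⟨a, b, ha, hb, hab, rfl⟩
  simp only [mem_ofPred_eq, Q.map_smul_add_smul, smul_eq_mul]
  have hcross : a * b * polar Q x y ≤ 0 := mul_nonpos_of_nonneg_of_nonpos (mul_nonneg ha hb) hxy
  rcases ha.lt_or_eq with ha | rfl
  · nlinarith [mul_pos ha ha, mul_nonneg hb hb]
  · obtain rfl : b = 1 := by simpa using hab
    simpa using hy

theorem mem_cone_of_polar_nonpos {E : Type*} [NormedAddCommGroup E] [NormedSpace ℝ E] {S : Set E}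
    (hS : ∀ x ∈ S, ∀ α : ℝ, 0 ≤ α → α • x ∈ S) (Q : QuadraticForm ℝ E) {x w : E} (hxS : x ∈ S)
    (hx : Q x < 0) (hw : Q w < 0) (hxw : polar Q x w ≤ 0)
    (hfr : ∀ y ∈ frontier S, ‖y‖ = ‖w‖ → 0 ≤ Q y) : w ∈ S := by
  set ρ : E → E := fun y => (‖w‖ / ‖y‖) • y
  have hseg := Q.segment_subset_of_polar_nonpos hx hw hxw
  have hne : ∀ y ∈ segment ℝ x w, y ≠ 0 := fun y hy h0 => by
    simpa [h0] using hseg hy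
  have hw0 : ‖w‖ ≠ 0 := norm_ne_zero_iff.2 (hne w (right_mem_segment ℝ x w))
  have hρ : ∀ y ∈ segment ℝ x w, ‖ρ y‖ = ‖w‖ ∧ Q (ρ y) < 0 := fun y hy => by
    have hy0 : ‖y‖ ≠ 0 := norm_ne_zero_iff.2 (hne y hy)
    refine ⟨?_, ?_⟩
    · rw [norm_smul, Real.norm_of_nonneg (by positivity), div_mul_cancel₀ _ hy0]
    · rw [Q.map_smul, smul_eq_mul]
      exact mul_neg_of_pos_of_neg (mul_self_pos.2 (div_ne_zero hw0 hy0)) (hseg hy)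
  have hK : IsPreconnected (ρ '' segment ℝ x w) :=
    (convex_segment x w).isPreconnected.image ρ
      ((continuousOn_const.div continuous_norm.continuousOn fun y hy =>
        norm_ne_zero_iff.2 (hne y hy)).smul continuousOn_id)
  have hdisj : Disjoint (ρ '' segment ℝ x w) (frontier S) := by
    rw [Set.disjoint_left]
    rintro _ ⟨y, hy, rfl⟩ hfrS
    exact (hfr _ hfrS (hρ y hy).1).not_gt (hρ y hy).2
  have hsub := hK.subset_of_disjoint_frontier hdisj
    ⟨ρ x, mem_image_of_mem ρ (left_mem_segment ℝ x w), hS x hxS _ (by positivity)⟩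
  have hρw : ρ w = w := by simp only [ρ, div_self hw0, one_smul]
  exact hρw ▸ hsub (mem_image_of_mem ρ (right_mem_segment ℝ x w))

theorem stmt1_general (d : ℕ) (δ r : ℝ) (hδ : 0 < δ) (hr : 0 < r)
    (M : Matrix (Fin d) (Fin d) ℝ)
    (f : EuclideanSpace ℝ (Fin d) → ℝ)
    (hf : ∀ x : EuclideanSpace ℝ (Fin d),
      f x = (1 / 2) * ⟪x, (WithLp.toLp 2 (M.mulVec x) : EuclideanSpace ℝ (Fin d))⟫)
    (S : Set (EuclideanSpace ℝ (Fin d)))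
    (hScone : ∀ x ∈ S, ∀ α : ℝ, 0 ≤ α → α • x ∈ S)
    (xh : EuclideanSpace ℝ (Fin d)) (hxh : ‖xh‖ = r) (hfxh : f xh < -δ)
    (h1 : ∃ x ∈ S, ‖x‖ ≤ r ∧ f x < -δ)
    (h2 : ∀ x ∈ frontier S, ‖x‖ ≤ r → f x ≥ -δ) :
    xh ∈ S ∨ -xh ∈ S := by
  obtain ⟨x₀, hx₀S, hx₀r, hfx₀⟩ := h1
  let Q : QuadraticForm ℝ (EuclideanSpace ℝ (Fin d)) := LinearMap.BilinMap.toQuadraticMap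
    ((innerₗ _).compl₂ ((1 / 2 : ℝ) • Matrix.toEuclideanLin M + (δ / r ^ 2) • LinearMap.id))
  have hQ : ∀ y, Q y = f y + δ / r ^ 2 * ‖y‖ ^ 2 := fun y => by
    simp [Q, hf, inner_add_right, inner_smul_right, Matrix.toLpLin_apply]
  have hQr : ∀ y, ‖y‖ = r → Q y = f y + δ := fun y hy => by
    rw [hQ, hy, div_mul_cancel₀ _ (by positivity)]
  have hQx₀ : Q x₀ < 0 := by
    have : δ / r ^ 2 * ‖x₀‖ ^ 2 ≤ δ := by
      rw [div_mul_eq_mul_div, div_le_iff₀ (by positivity)]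
      gcongr
    linarith [hQ x₀]
  have hQxh : Q xh < 0 := by linarith [hQr xh hxh]
  have hfr : ∀ y ∈ frontier S, ‖y‖ = ‖xh‖ → 0 ≤ Q y := fun y hy hyr => by
    rw [hxh] at hyr
    linarith [hQr y hyr, h2 y hy hyr.le]
  rcases le_total (polar Q x₀ xh) 0 with hpolar | hpolar
  · exact .inl (mem_cone_of_polar_nonpos hScone Q hx₀S hQx₀ hQxh hpolar hfr)
  · refine .inr (mem_cone_of_polar_nonpos hScone Q hx₀S hQx₀ (by rwa [Q.map_neg]) ?_ ?_)
    · rw [polar_neg_right]; linarith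
    · simpa only [norm_neg] using hfr

/-- If `0` is a `(δ,r)`-QCSP but not a `(δ,r)`-boundary QCSP for a quadratic
form with symmetric matrix `M` over a nonempty closed linear cone `S`, then for any
`x̂` with `‖x̂‖ = r` and `f(x̂) < -δ`, either `x̂ ∈ S` or `-x̂ ∈ S`. -/
theorem stmt1 (d : ℕ) (hd : 1 ≤ d) (δ r : ℝ) (hδ : 0 < δ) (hr : 0 < r)
    (M : Matrix (Fin d) (Fin d) ℝ) (hM : M.IsSymm)
    (f : EuclideanSpace ℝ (Fin d) → ℝ)
    (hf : ∀ x : EuclideanSpace ℝ (Fin d),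
      f x = (1 / 2) * ⟪x, (WithLp.toLp 2 (M.mulVec x) : EuclideanSpace ℝ (Fin d))⟫)
    (S : Set (EuclideanSpace ℝ (Fin d))) (hSne : S.Nonempty) (hScl : IsClosed S)
    (hScone : ∀ x ∈ S, ∀ α : ℝ, 0 ≤ α → α • x ∈ S)
    (xh : EuclideanSpace ℝ (Fin d)) (hxh : ‖xh‖ = r) (hfxh : f xh < -δ)
    (h1 : ∃ x ∈ S, ‖x‖ ≤ r ∧ f x < -δ)
    (h2 : ∀ x ∈ frontier S, ‖x‖ ≤ r → f x ≥ -δ) :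
    xh ∈ S ∨ -xh ∈ S :=
  stmt1_general d δ r hδ hr M f hf S hScone xh hxh hfxh h1 h2
end

section
/- Let d ≥ 1, δ, r > 0, and let M be a real symmetric d×d matrix with quadratic form f(x) = (1/2)·xᵀMx. Let e ∈ ℝ^d be an eigenvector of M (Me = λe for some λ ∈ ℝ) with ‖e‖ = r and f(e) < -δ, and let x̂ ∈ ℝ^d satisfy ‖x̂‖ = r, f(x̂) < -δ, and ⟨x̂, e⟩ ≥ 0. Then for all α, β ≥ 0 with ‖α·x̂ + β·e‖ = r, one has f(α·x̂ + β·e) < -δ. -/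
open scoped RealInnerProductSpace

/-!
For a symmetric `S` with eigenvector `e` (eigenvalue `μ`), the quadratic form at `α x + β e` is
`α² ⟪x, S x⟫ + 2αβ μ ⟪x, e⟫ + β² ⟪e, S e⟫`. If `⟪e, S e⟫ = μ ‖e‖² < 0` then `μ ≤ 0`, so with
`⟪x, e⟫ ≥ 0` the cross term is nonpositive and the form stays negative on the whole cone. On the
sphere of radius `r`, the condition `f y < -δ` is negativity of the form of the shifted operator
`r² M + 2δ`, which keeps `e` as an eigenvector.
-/

namespace LinearMap

variable {E : Type*} [NormedAddCommGroup E] [InnerProductSpace ℝ E]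

theorem IsSymmetric.inner_map_self_smul_add_smul_neg {S : E →ₗ[ℝ] E} (hS : S.IsSymmetric)
    {x e : E} {μ : ℝ} (he : S e = μ • e) (hx : ⟪x, S x⟫ < 0) (hee : ⟪e, S e⟫ < 0)
    (hxe : 0 ≤ ⟪x, e⟫) {α β : ℝ} (hα : 0 ≤ α) (hβ : 0 ≤ β) (hαβ : α ≠ 0 ∨ β ≠ 0) :
    ⟪α • x + β • e, S (α • x + β • e)⟫ < 0 := by
  have hμ : μ ≤ 0 := by
    rw [he, real_inner_smul_right, real_inner_self_eq_norm_sq] at hee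
    nlinarith [sq_nonneg ‖e‖]
  have hcross : ⟪e, S x⟫ = μ * ⟪x, e⟫ := by
    rw [← hS, he, real_inner_smul_left, real_inner_comm]
  have hexpand : ⟪α • x + β • e, S (α • x + β • e)⟫
      = α ^ 2 * ⟪x, S x⟫ + 2 * (α * β) * (μ * ⟪x, e⟫) + β ^ 2 * ⟪e, S e⟫ := by
    simp only [map_add, map_smul, inner_add_left, inner_add_right, real_inner_smul_left,
      real_inner_smul_right, hcross]
    rw [he, real_inner_smul_right, real_inner_comm e x]
    ring
  have hcross_nonpos : 2 * (α * β) * (μ * ⟪x, e⟫) ≤ 0 :=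
    mul_nonpos_of_nonneg_of_nonpos (by positivity) (mul_nonpos_of_nonpos_of_nonneg hμ hxe)
  rw [hexpand]
  rcases hαβ with hα0 | hβ0
  · nlinarith [pow_pos (lt_of_le_of_ne hα (Ne.symm hα0)) 2, sq_nonneg β]
  · nlinarith [pow_pos (lt_of_le_of_ne hβ (Ne.symm hβ0)) 2, sq_nonneg α]

theorem inner_map_self_smul_add_smul_id (T : E →ₗ[ℝ] E) (a b : ℝ) (y : E) :
    ⟪y, (a • T + b • LinearMap.id : E →ₗ[ℝ] E) y⟫ = a * ⟪y, T y⟫ + b * ‖y‖ ^ 2 := by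
  simp only [add_apply, smul_apply, id_apply, inner_add_right, real_inner_smul_right,
    real_inner_self_eq_norm_sq]

end LinearMap

theorem stmt3_general (d : ℕ) (δ r : ℝ) (hr : 0 < r)
    (M : Matrix (Fin d) (Fin d) ℝ) (hM : M.IsSymm)
    (f : EuclideanSpace ℝ (Fin d) → ℝ)
    (hf : ∀ x : EuclideanSpace ℝ (Fin d),
      f x = (1 / 2) * ⟪x, (WithLp.toLp 2 (M.mulVec x) : EuclideanSpace ℝ (Fin d))⟫)
    (e : EuclideanSpace ℝ (Fin d)) (lam : ℝ) (heig : M.mulVec e = lam • e)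
    (hre : ‖e‖ = r) (hfe : f e < -δ)
    (xh : EuclideanSpace ℝ (Fin d)) (hrx : ‖xh‖ = r) (hfx : f xh < -δ)
    (hip : 0 ≤ ⟪xh, e⟫) :
    ∀ α β : ℝ, 0 ≤ α → 0 ≤ β → ‖α • xh + β • e‖ = r → f (α • xh + β • e) < -δ := by
  intro α β hα hβ hnorm
  set T := M.toEuclideanLin
  have hfT : ∀ y, f y = 1 / 2 * ⟪y, T y⟫ := hf
  have hT : T.IsSymmetric :=
    Matrix.isSymmetric_toEuclideanLin_iff.mpr (Matrix.isHermitian_iff_isSymm.mpr hM)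
  set S := r ^ 2 • T + (2 * δ) • LinearMap.id
  have hS : S.IsSymmetric := (hT.smul (by simp)).add (LinearMap.IsSymmetric.id.smul (by simp))
  have hSe : S e = (r ^ 2 * lam + 2 * δ) • e := by
    have hTe : T e = lam • e := congrArg (WithLp.toLp 2) heig
    simp only [S, LinearMap.add_apply, LinearMap.smul_apply, LinearMap.id_apply, hTe, add_smul,
      smul_smul]
  have hS_neg_iff {y} (hy : ‖y‖ = r) : ⟪y, S y⟫ < 0 ↔ f y < -δ := by
    rw [LinearMap.inner_map_self_smul_add_smul_id, hy, hfT]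
    constructor <;> intro h <;> nlinarith [pow_pos hr 2]
  have hαβ : α ≠ 0 ∨ β ≠ 0 := by
    by_contra! h
    simp only [h.1, h.2, zero_smul, add_zero, norm_zero] at hnorm
    exact hr.ne hnorm
  exact (hS_neg_iff hnorm).1 <| hS.inner_map_self_smul_add_smul_neg hSe
    ((hS_neg_iff hrx).2 hfx) ((hS_neg_iff hre).2 hfe) hip hα hβ hαβ

/-- On the arc spanned by nonnegative combinations of `x̂` and an eigenvector
`e` (both of norm `r`, both with quadratic value `< -δ`, and `⟨x̂, e⟩ ≥ 0`), every point
of norm `r` also has quadratic value `< -δ`. -/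
theorem stmt3 (d : ℕ) (hd : 1 ≤ d) (δ r : ℝ) (hδ : 0 < δ) (hr : 0 < r)
    (M : Matrix (Fin d) (Fin d) ℝ) (hM : M.IsSymm)
    (f : EuclideanSpace ℝ (Fin d) → ℝ)
    (hf : ∀ x : EuclideanSpace ℝ (Fin d),
      f x = (1 / 2) * ⟪x, (WithLp.toLp 2 (M.mulVec x) : EuclideanSpace ℝ (Fin d))⟫)
    (e : EuclideanSpace ℝ (Fin d)) (lam : ℝ) (heig : M.mulVec e = lam • e)
    (hre : ‖e‖ = r) (hfe : f e < -δ)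
    (xh : EuclideanSpace ℝ (Fin d)) (hrx : ‖xh‖ = r) (hfx : f xh < -δ)
    (hip : 0 ≤ ⟪xh, e⟫) :
    ∀ α β : ℝ, 0 ≤ α → 0 ≤ β → ‖α • xh + β • e‖ = r → f (α • xh + β • e) < -δ :=
  stmt3_general d δ r hr M hM f hf e lam heig hre hfe xh hrx hfx hip
end

section
/- Let n, d ≥ 1, let x⁽¹⁾, …, x⁽ⁿ⁾ ∈ ℝ^d, μ ∈ ℝ^d, and let σ₁, …, σ_d ≥ 0 and σ ≥ 0 satisfy Σ_j σ_j² ≤ σ². Suppose for every coordinate j ∈ {1,…,d}, strictly more than n/2 of the indices i satisfy |x⁽ⁱ⁾_j − μ_j| ≤ 2σ_j. Let ζ ∈ ℝ^d be any coordinate-wise median, i.e. for each j, at least n/2 indices i satisfy x⁽ⁱ⁾_j ≤ ζ_j and at least n/2 indices i satisfy x⁽ⁱ⁾_j ≥ ζ_j. Then ‖ζ − μ‖ ≤ 2σ. -/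
open scoped RealInnerProductSpace

/-- Coordinate-wise median trick. If for every coordinate `j`, strictly more
than `n/2` of the points `x⁽ⁱ⁾` satisfy `|x⁽ⁱ⁾_j − μ_j| ≤ 2σ_j`, where `Σ_j σ_j² ≤ σ²`,
then any coordinate-wise median `ζ` satisfies `‖ζ − μ‖ ≤ 2σ`. -/
theorem stmt7 (n d : ℕ) (hn : 1 ≤ n) (hd : 1 ≤ d)
    (x : Fin n → EuclideanSpace ℝ (Fin d)) (μ : EuclideanSpace ℝ (Fin d))
    (σs : Fin d → ℝ) (hσs : ∀ j, 0 ≤ σs j) (σ : ℝ) (hσ : 0 ≤ σ)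
    (hsum : ∑ j, σs j ^ 2 ≤ σ ^ 2)
    (hmaj : ∀ j : Fin d, (n : ℝ) / 2 <
      ((Finset.univ.filter fun i : Fin n => |x i j - μ j| ≤ 2 * σs j).card : ℝ))
    (ζ : EuclideanSpace ℝ (Fin d))
    (hmed : ∀ j : Fin d,
      (n : ℝ) / 2 ≤ ((Finset.univ.filter fun i : Fin n => x i j ≤ ζ j).card : ℝ) ∧
      (n : ℝ) / 2 ≤ ((Finset.univ.filter fun i : Fin n => ζ j ≤ x i j).card : ℝ)) :
    ‖ζ - μ‖ ≤ 2 * σ := by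
  have key : ∀ j, |ζ j - μ j| ≤ 2 * σs j := by
    intro j
    obtain ⟨hL, hR⟩ := hmed j
    have hA := hmaj j
    set A := Finset.univ.filter fun i : Fin n => |x i j - μ j| ≤ 2 * σs j with hAdef
    have hinter : ∀ s : Finset (Fin n), (n : ℝ) / 2 ≤ (s.card : ℝ) →
        (A ∩ s).Nonempty := by
      intro s hs
      by_contra h
      rw [Finset.not_nonempty_iff_eq_empty] at h
      have hu := Finset.card_union_add_card_inter A s
      rw [h, Finset.card_empty] at hu
      have hle : A.card + s.card ≤ n := by
        rw [← Nat.add_zero (A.card + s.card), ← hu]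
        simpa using (Finset.card_le_univ (A ∪ s))
      have : ((A.card + s.card : ℕ) : ℝ) ≤ (n : ℝ) := by exact_mod_cast hle
      push_cast at this
      linarith
    obtain ⟨i₁, hi₁⟩ := hinter _ hL
    obtain ⟨i₂, hi₂⟩ := hinter _ hR
    simp only [Finset.mem_inter, hAdef, Finset.mem_filter, Finset.mem_univ, true_and] at hi₁ hi₂
    obtain ⟨ha1, hb1⟩ := hi₁
    obtain ⟨ha2, hb2⟩ := hi₂
    rw [abs_le] at ha1 ha2 ⊢
    constructor <;> [linarith [ha1.1]; linarith [ha2.2]]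
  have h1 : ‖ζ - μ‖ ^ 2 ≤ (2 * σ) ^ 2 := by
    rw [EuclideanSpace.norm_eq, Real.sq_sqrt (by positivity)]
    calc ∑ j, ‖(ζ - μ) j‖ ^ 2 ≤ ∑ j, (2 * σs j) ^ 2 := by
          refine Finset.sum_le_sum fun j _ => ?_
          have h2 : ‖(ζ - μ) j‖ = |ζ j - μ j| := by
            simp [Real.norm_eq_abs]
          rw [h2]
          exact pow_le_pow_left₀ (abs_nonneg _) (key j) 2
      _ = 4 * ∑ j, σs j ^ 2 := by
          rw [Finset.mul_sum]; exact Finset.sum_congr rfl fun j _ => by ring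
      _ ≤ (2 * σ) ^ 2 := by nlinarith
  nlinarith [norm_nonneg (ζ - μ)]
end

section
/- Let ρ, δ > 0, set ε = (δ²ρ)^{1/3} and r = (δ/ρ)^{1/3}, and let f : ℝ^d → ℝ be twice continuously differentiable with a ρ-Lipschitz Hessian. Let x ∈ ℝ^d satisfy ‖∇f(x)‖ < ε and ⟨h, ∇²f(x)·h⟩ ≥ −√(ρε)·‖h‖² for all h ∈ ℝ^d (note √(ρε) = (δρ²)^{1/3}). Then for every h with ‖h‖ ≤ r, f(x + h) − f(x) ≥ −2δ. -/
open scoped RealInnerProductSpace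

open Set Metric

/-!
Along the segment `t ↦ x + t • h`, the Lipschitz Hessian keeps the gradient within
`ρ t² ‖h‖²` of its linearisation `∇f(x) + t ∇²f(x) h`; integrating gives the cubic Taylor bound
`f (x + h) - f x ≥ ⟪∇f(x), h⟫ + ⟪h, ∇²f(x) h⟫ / 2 - ρ ‖h‖³ / 3`.
Writing `δ = c³` and `ρ = p³`, we have `ε = c² p`, `r = c / p` and `√(ρ ε) = p² c`, so for
`‖h‖ ≤ r` the three terms are at least `-δ`, `-δ / 2` and `-δ / 3`.
-/

theorem ContDiff.gradient_right {E : Type*} [NormedAddCommGroup E] [InnerProductSpace ℝ E]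
    [CompleteSpace E] {m n : WithTop ℕ∞} {f : E → ℝ} (hf : ContDiff ℝ n f) (hmn : m + 1 ≤ n) :
    ContDiff ℝ m (gradient f) :=
  -- `toDual` is only conjugate-linear as stated; Mazur–Ulam repackages its inverse as ℝ-linear.
  ((InnerProductSpace.toDual ℝ E).symm.toIsometryEquiv.toRealLinearIsometryEquivOfMapZero
    (map_zero (InnerProductSpace.toDual ℝ E).symm)).contDiff.comp (hf.fderiv_right hmn)

theorem norm_image_add_sub_sub_fderiv_le {E F : Type*} [NormedAddCommGroup E] [NormedSpace ℝ E]
    [NormedAddCommGroup F] [NormedSpace ℝ F] {g : E → F} {x : E} {ρ : ℝ}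
    (hg : Differentiable ℝ g) (hlip : ∀ y, ‖fderiv ℝ g y - fderiv ℝ g x‖ ≤ ρ * ‖y - x‖) (h : E) :
    ‖g (x + h) - g x - fderiv ℝ g x h‖ ≤ ρ * ‖h‖ ^ 2 := by
  rcases eq_or_ne h 0 with rfl | hh
  · simp
  have hρ : 0 ≤ ρ := by
    simpa [norm_pos_iff.mpr hh] using (norm_nonneg _).trans (hlip (x + h))
  have bound : ∀ y ∈ closedBall x ‖h‖, ‖fderiv ℝ g y - fderiv ℝ g x‖ ≤ ρ * ‖h‖ := fun y hy =>
    (hlip y).trans (mul_le_mul_of_nonneg_left (mem_closedBall_iff_norm.mp hy) hρ)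
  have := (convex_closedBall x ‖h‖).norm_image_sub_le_of_norm_fderiv_le' (fun y _ => hg y)
    bound (mem_closedBall_self (norm_nonneg h)) (x := x) (y := x + h) (by simp)
  simpa [sq, mul_assoc] using this

theorem le_sub_of_le_hasDerivAt_quadratic {φ φ' : ℝ → ℝ} {a b c : ℝ}
    (hφ : ∀ t ∈ Icc (0 : ℝ) 1, HasDerivAt φ (φ' t) t)
    (hle : ∀ t ∈ Ioo (0 : ℝ) 1, a + b * t - c * t ^ 2 ≤ φ' t) :
    a + b / 2 - c / 3 ≤ φ 1 - φ 0 := by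
  set p : ℝ → ℝ := fun t => a * t + b / 2 * t ^ 2 - c / 3 * t ^ 3
  have hp : ∀ t, HasDerivAt p (a + b * t - c * t ^ 2) t := by
    intro t
    refine ((((hasDerivAt_id' t).const_mul a).add ((hasDerivAt_pow 2 t).const_mul (b / 2))).sub
      ((hasDerivAt_pow 3 t).const_mul (c / 3))).congr_deriv ?_
    push_cast
    ring
  have hmono : MonotoneOn (φ - p) (Icc 0 1) := by
    refine monotoneOn_of_deriv_nonneg (convex_Icc 0 1)
      (fun t ht => ((hφ t ht).sub (hp t)).continuousAt.continuousWithinAt)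
      (fun t ht => ((hφ t (interior_subset ht)).sub (hp t)).differentiableAt.differentiableWithinAt)
      fun t ht => ?_
    rw [interior_Icc] at ht
    rw [((hφ t (Ioo_subset_Icc_self ht)).sub (hp t)).deriv, sub_nonneg]
    exact hle t ht
  have := hmono (left_mem_Icc.mpr zero_le_one) (right_mem_Icc.mpr zero_le_one) zero_le_one
  simp only [Pi.sub_apply, p] at this
  linarith

theorem inner_gradient_add_inner_hessian_div_two_sub_le {E : Type*} [NormedAddCommGroup E]
    [InnerProductSpace ℝ E] [CompleteSpace E] {f : E → ℝ} {x : E} {ρ : ℝ}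
    (hf : Differentiable ℝ f) (hg : Differentiable ℝ (gradient f))
    (hlip : ∀ y, ‖fderiv ℝ (gradient f) y - fderiv ℝ (gradient f) x‖ ≤ ρ * ‖y - x‖) (h : E) :
    ⟪gradient f x, h⟫ + ⟪h, fderiv ℝ (gradient f) x h⟫ / 2 - ρ * ‖h‖ ^ 3 / 3 ≤
      f (x + h) - f x := by
  set H := fderiv ℝ (gradient f) x
  have hderiv (t : ℝ) :
      HasDerivAt (fun s : ℝ => f (x + s • h)) ⟪gradient f (x + t • h), h⟫ t := by
    have hline : HasDerivAt (fun s : ℝ => x + s • h) h t := by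
      simpa using ((hasDerivAt_id t).smul_const h).const_add x
    exact ((hf _).hasGradientAt.hasFDerivAt.comp_hasDerivAt t hline).congr_deriv (by simp)
  have hle (t : ℝ) (ht : t ∈ Ioo (0 : ℝ) 1) :
      ⟪gradient f x, h⟫ + ⟪h, H h⟫ * t - ρ * ‖h‖ ^ 3 * t ^ 2 ≤ ⟪gradient f (x + t • h), h⟫ := by
    set R := gradient f (x + t • h) - gradient f x - H (t • h)
    have hR : ‖R‖ * ‖h‖ ≤ ρ * ‖h‖ ^ 3 * t ^ 2 := by
      have := mul_le_mul_of_nonneg_right (norm_image_add_sub_sub_fderiv_le hg hlip (t • h))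
        (norm_nonneg h)
      rw [norm_smul, Real.norm_eq_abs, abs_of_pos ht.1] at this
      linarith
    have hsplit : ⟪gradient f (x + t • h), h⟫ = ⟪gradient f x, h⟫ + ⟪h, H h⟫ * t + ⟪R, h⟫ := by
      simp only [R, inner_sub_left, map_smul, real_inner_smul_left, real_inner_comm h (H h)]
      ring
    linarith [neg_le_of_abs_le (abs_real_inner_le_norm R h)]
  have := le_sub_of_le_hasDerivAt_quadratic (fun t _ => hderiv t) hle
  simp only [one_smul, zero_smul, add_zero] at this
  linarith

theorem rpow_one_third_pow_three {y : ℝ} (hy : 0 ≤ y) : (y ^ 3) ^ ((1 : ℝ) / 3) = y := by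
  simpa [one_div] using Real.pow_rpow_inv_natCast hy (n := 3) (by norm_num)

theorem exists_pos_pow_three_eq {y : ℝ} (hy : 0 < y) : ∃ c > 0, y = c ^ 3 :=
  ⟨y ^ ((1 : ℝ) / 3), by positivity,
    by simpa [one_div] using (Real.rpow_inv_natCast_pow hy.le (n := 3) (by norm_num)).symm⟩

/-- For `ε = (δ²ρ)^{1/3}`, `r = (δ/ρ)^{1/3}`, a function with `ρ`-Lipschitz
Hessian, a point with `‖∇f(x)‖ < ε` and `⟨h, ∇²f(x) h⟩ ≥ −√(ρε)‖h‖²` for all `h`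
satisfies `f(x + h) − f(x) ≥ −2δ` for all `h` with `‖h‖ ≤ r`. -/
theorem stmt9 (d : ℕ) (ρ δ : ℝ) (hρ : 0 < ρ) (hδ : 0 < δ)
    (ε r : ℝ) (hε : ε = (δ ^ 2 * ρ) ^ ((1 : ℝ) / 3)) (hr : r = (δ / ρ) ^ ((1 : ℝ) / 3))
    (f : EuclideanSpace ℝ (Fin d) → ℝ) (hf : ContDiff ℝ 2 f)
    (hlip : ∀ x y : EuclideanSpace ℝ (Fin d),
      ‖fderiv ℝ (gradient f) x - fderiv ℝ (gradient f) y‖ ≤ ρ * ‖x - y‖)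
    (x : EuclideanSpace ℝ (Fin d)) (hgrad : ‖gradient f x‖ < ε)
    (hhess : ∀ h : EuclideanSpace ℝ (Fin d),
      ⟪h, fderiv ℝ (gradient f) x h⟫ ≥ -Real.sqrt (ρ * ε) * ‖h‖ ^ 2) :
    ∀ h : EuclideanSpace ℝ (Fin d), ‖h‖ ≤ r → f (x + h) - f x ≥ -2 * δ := by
  intro h hh
  obtain ⟨c, hc, rfl⟩ := exists_pos_pow_three_eq hδ
  obtain ⟨p, hp, rfl⟩ := exists_pos_pow_three_eq hρ
  have hε' : ε = c ^ 2 * p := by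
    rw [hε, show (c ^ 3) ^ 2 * p ^ 3 = (c ^ 2 * p) ^ 3 by ring,
      rpow_one_third_pow_three (by positivity)]
  have hr' : r = c / p := by
    rw [hr, ← div_pow, rpow_one_third_pow_three (by positivity)]
  have hsqrt : √(p ^ 3 * ε) = p ^ 2 * c := by
    rw [hε', show p ^ 3 * (c ^ 2 * p) = (p ^ 2 * c) ^ 2 by ring, Real.sqrt_sq (by positivity)]
  have hph : p * ‖h‖ ≤ c := by rwa [hr', le_div_iff₀ hp, mul_comm] at hh
  have hgrad_term : -c ^ 3 ≤ ⟪gradient f x, h⟫ := by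
    have := mul_le_mul (hgrad.le.trans_eq hε') (hh.trans_eq hr') (norm_nonneg h)
      (by positivity)
    rw [show c ^ 2 * p * (c / p) = c ^ 3 by field_simp] at this
    linarith [neg_le_of_abs_le (abs_real_inner_le_norm (gradient f x) h)]
  have hhess_term : -c ^ 3 ≤ ⟪h, fderiv ℝ (gradient f) x h⟫ := by
    have hsq : (p * ‖h‖) ^ 2 * c ≤ c ^ 2 * c := by gcongr
    have := hhess h
    rw [hsqrt] at this
    linarith
  have hcubic_term : p ^ 3 * ‖h‖ ^ 3 ≤ c ^ 3 := by
    rw [← mul_pow]; exact pow_le_pow_left₀ (by positivity) hph 3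
  have htaylor := inner_gradient_add_inner_hessian_div_two_sub_le
    (hf.differentiable (by norm_num))
    ((hf.gradient_right (m := 1) (by norm_num)).differentiable (by norm_num))
    (fun y => hlip y x) h
  linarith
end

section
/- Let f : ℝ^d → ℝ be twice continuously differentiable with a ρ-Lipschitz Hessian, let x ∈ ℝ^d, θ > 0, σ̃ ≥ 0, and let e₁, …, e_d be the standard basis of ℝ^d. Let g⁰, g₁, …, g_d ∈ ℝ^d satisfy ‖g⁰ − ∇f(x)‖ ≤ σ̃ and ‖g_i − ∇f(x + θe_i)‖ ≤ σ̃ for all i, and let H be the d×d matrix whose i-th column is (g_i − g⁰)/θ. Then for every h ∈ ℝ^d: |⟨h, Hh⟩ − ⟨h, ∇²f(x)·h⟩| ≤ √d·‖h‖²·(2σ̃/θ + ρθ/2). -/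
open scoped RealInnerProductSpace

/-!
Each column `θ⁻¹ (gᵢ - g⁰)` of `H` is within `2σ̃/θ + ρθ/2` of `∇²f(x) eᵢ`: the gradient errors
contribute `2σ̃/θ`, and the first-order Taylor remainder of `∇f` along `θ eᵢ`, which the
Lipschitz Hessian bounds by `ρθ²/2`, contributes `ρθ/2`. Since `‖h‖₁ ≤ √d ‖h‖`, a linear map `M`
with `‖M eᵢ‖ ≤ ε` for all `i` satisfies `‖M h‖ ≤ √d ε ‖h‖`; applied to `M = H - ∇²f(x)`,
Cauchy–Schwarz then bounds the quadratic form.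
-/

section Taylor

variable {E F : Type*} [NormedAddCommGroup E] [NormedSpace ℝ E]
  [NormedAddCommGroup F] [NormedSpace ℝ F] {G : E → F} {ρ : ℝ}

theorem norm_sub_sub_fderiv_apply_le_of_lipschitz_fderiv (hG : Differentiable ℝ G)
    (hlip : ∀ x y, ‖fderiv ℝ G x - fderiv ℝ G y‖ ≤ ρ * ‖x - y‖) (x v : E) :
    ‖G (x + v) - G x - fderiv ℝ G x v‖ ≤ ρ / 2 * ‖v‖ ^ 2 := by
  set A := fderiv ℝ G x
  set φ : ℝ → F := fun t => G (x + t • v) - G x - t • A v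
  set φ' : ℝ → F := fun t => (fderiv ℝ G (x + t • v) - A) v
  have hφ : ∀ t, HasDerivAt φ (φ' t) t := by
    intro t
    have line : HasDerivAt (fun t : ℝ => x + t • v) v t := by
      simpa using ((hasDerivAt_id t).smul_const v).const_add x
    have hGline := (hG (x + t • v)).hasFDerivAt.comp_hasDerivAt t line
    simpa [φ, φ'] using (hGline.sub_const (G x)).fun_sub ((hasDerivAt_id t).smul_const (A v))
  have hB : ∀ t, HasDerivAt (fun t : ℝ => ρ * ‖v‖ ^ 2 * (t ^ 2 / 2)) (ρ * ‖v‖ ^ 2 * t) t := by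
    intro t
    simpa using ((hasDerivAt_pow 2 t).div_const 2).const_mul (ρ * ‖v‖ ^ 2)
  have hφ'_le : ∀ t ∈ Set.Ico (0 : ℝ) 1, ‖φ' t‖ ≤ ρ * ‖v‖ ^ 2 * t := by
    intro t ht
    calc ‖φ' t‖ ≤ ‖fderiv ℝ G (x + t • v) - A‖ * ‖v‖ := ContinuousLinearMap.le_opNorm _ _
      _ ≤ ρ * ‖x + t • v - x‖ * ‖v‖ := by gcongr; exact hlip _ _
      _ = ρ * ‖v‖ ^ 2 * t := by
        rw [add_sub_cancel_left, norm_smul, Real.norm_of_nonneg ht.1]; ring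
  have key := image_norm_le_of_norm_deriv_right_le_deriv_boundary
    (fun t _ => (hφ t).continuousAt.continuousWithinAt) (fun t _ => (hφ t).hasDerivWithinAt)
    (by simp [φ]) hB hφ'_le (Set.right_mem_Icc.2 zero_le_one)
  simp only [φ, one_smul, one_pow] at key
  linarith

theorem norm_finite_difference_sub_fderiv_le (hG : Differentiable ℝ G)
    (hlip : ∀ x y, ‖fderiv ℝ G x - fderiv ℝ G y‖ ≤ ρ * ‖x - y‖) {θ σ : ℝ} (hθ : 0 < θ)
    {x v : E} {a b : F} (ha : ‖a - G (x + θ • v)‖ ≤ σ) (hb : ‖b - G x‖ ≤ σ) :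
    ‖θ⁻¹ • (a - b) - fderiv ℝ G x v‖ ≤ 2 * σ / θ + ρ * θ / 2 * ‖v‖ ^ 2 := by
  have htaylor := norm_sub_sub_fderiv_apply_le_of_lipschitz_fderiv hG hlip x (θ • v)
  rw [norm_smul, Real.norm_of_nonneg hθ.le] at htaylor
  have hsplit : θ⁻¹ • (a - b) - fderiv ℝ G x v = θ⁻¹ • ((a - G (x + θ • v)) - (b - G x)
      + (G (x + θ • v) - G x - fderiv ℝ G x (θ • v))) := by
    rw [map_smul, smul_add, smul_sub _ _ (θ • _), inv_smul_smul₀ hθ.ne']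
    module
  calc ‖θ⁻¹ • (a - b) - fderiv ℝ G x v‖
      ≤ θ⁻¹ * (‖a - G (x + θ • v)‖ + ‖b - G x‖
          + ‖G (x + θ • v) - G x - fderiv ℝ G x (θ • v)‖) := by
        rw [hsplit, norm_smul, Real.norm_of_nonneg (inv_nonneg.2 hθ.le)]
        gcongr
        exact (norm_add_le _ _).trans (add_le_add_left (norm_sub_le _ _) _)
    _ ≤ θ⁻¹ * (σ + σ + ρ / 2 * (θ * ‖v‖) ^ 2) := by gcongr
    _ = 2 * σ / θ + ρ * θ / 2 * ‖v‖ ^ 2 := by field_simp; ring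

end Taylor

theorem ContDiff.differentiable_gradient {F : Type*} [NormedAddCommGroup F]
    [InnerProductSpace ℝ F] [CompleteSpace F] {f : F → ℝ} {n : WithTop ℕ∞} (hf : ContDiff ℝ n f)
    (hn : 2 ≤ n) : Differentiable ℝ (gradient f) :=
  (InnerProductSpace.toDual ℝ F).symm.differentiable.comp
    ((hf.fderiv_right (m := 1) hn).differentiable one_ne_zero)

namespace EuclideanSpace

variable {ι : Type*} [Fintype ι]

theorem sum_abs_le_sqrt_card_mul_norm (h : EuclideanSpace ℝ ι) :
    ∑ i, |h i| ≤ √(Fintype.card ι) * ‖h‖ := by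
  rw [← Real.sqrt_sq (norm_nonneg h), ← Real.sqrt_mul (Nat.cast_nonneg _),
    Real.le_sqrt (Finset.sum_nonneg fun i _ => abs_nonneg _) (by positivity),
    EuclideanSpace.real_norm_sq_eq]
  simpa using sq_sum_le_card_mul_sum_sq (s := Finset.univ) (f := fun i => |h i|)

theorem norm_apply_le_of_norm_apply_single_le [DecidableEq ι] {F : Type*}
    [NormedAddCommGroup F] [NormedSpace ℝ F] (M : EuclideanSpace ℝ ι →ₗ[ℝ] F) {ε : ℝ}
    (hM : ∀ i, ‖M (single i 1)‖ ≤ ε) (h : EuclideanSpace ℝ ι) :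
    ‖M h‖ ≤ √(Fintype.card ι) * ε * ‖h‖ := by
  rcases isEmpty_or_nonempty ι with hι | ⟨⟨i₀⟩⟩
  · simp [Subsingleton.elim h 0]
  have hε : 0 ≤ ε := (norm_nonneg _).trans (hM i₀)
  have hexpand : M h = ∑ i, h i • M (single i 1) := by
    conv_lhs => rw [← (basisFun ι ℝ).sum_repr h]
    simp [map_sum]
  calc ‖M h‖ ≤ ∑ i, |h i| * ε := by
        rw [hexpand]
        refine (norm_sum_le _ _).trans (Finset.sum_le_sum fun i _ => ?_)
        rw [norm_smul, Real.norm_eq_abs]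
        gcongr
        exact hM i
    _ = ε * ∑ i, |h i| := by rw [Finset.mul_sum]; simp_rw [mul_comm]
    _ ≤ ε * (√(Fintype.card ι) * ‖h‖) := by gcongr; exact sum_abs_le_sqrt_card_mul_norm h
    _ = √(Fintype.card ι) * ε * ‖h‖ := by ring

end EuclideanSpace

theorem stmt15_general (d : ℕ) (ρ θ σt : ℝ) (hθ : 0 < θ)
    (f : EuclideanSpace ℝ (Fin d) → ℝ) (hf : ContDiff ℝ 2 f)
    (hlip : ∀ x y : EuclideanSpace ℝ (Fin d),
      ‖fderiv ℝ (gradient f) x - fderiv ℝ (gradient f) y‖ ≤ ρ * ‖x - y‖)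
    (x : EuclideanSpace ℝ (Fin d))
    (g0 : EuclideanSpace ℝ (Fin d)) (g : Fin d → EuclideanSpace ℝ (Fin d))
    (hg0 : ‖g0 - gradient f x‖ ≤ σt)
    (hg : ∀ i : Fin d, ‖g i - gradient f (x + θ • EuclideanSpace.single i 1)‖ ≤ σt)
    (H : Matrix (Fin d) (Fin d) ℝ)
    (hH : ∀ i j : Fin d, H j i = (g i j - g0 j) / θ) :
    ∀ h : EuclideanSpace ℝ (Fin d),
      |⟪h, (WithLp.toLp 2 (H.mulVec h) : EuclideanSpace ℝ (Fin d))⟫ -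
          ⟪h, fderiv ℝ (gradient f) x h⟫| ≤
        Real.sqrt d * ‖h‖ ^ 2 * (2 * σt / θ + ρ * θ / 2) := by
  intro h
  set A := fderiv ℝ (gradient f) x
  set M := Matrix.toEuclideanLin H - A.toLinearMap
  have hcol : ∀ i, ‖M (EuclideanSpace.single i 1)‖ ≤ 2 * σt / θ + ρ * θ / 2 := by
    intro i
    have hMi : M (EuclideanSpace.single i 1) = θ⁻¹ • (g i - g0) - A (EuclideanSpace.single i 1) := by
      ext j
      simp [M, Matrix.mulVec_single, hH, div_eq_inv_mul]
    simpa [hMi] using norm_finite_difference_sub_fderiv_le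
      (hf.differentiable_gradient le_rfl) hlip hθ (hg i) hg0
  calc |⟪h, (WithLp.toLp 2 (H.mulVec h) : EuclideanSpace ℝ (Fin d))⟫ - ⟪h, A h⟫|
      = |⟪h, M h⟫| := by simp [M, inner_sub_right, Matrix.toLpLin_apply]
    _ ≤ ‖h‖ * ‖M h‖ := abs_real_inner_le_norm _ _
    _ ≤ ‖h‖ * (√d * (2 * σt / θ + ρ * θ / 2) * ‖h‖) := by
        gcongr
        simpa using EuclideanSpace.norm_apply_le_of_norm_apply_single_le M hcol h
    _ = √d * ‖h‖ ^ 2 * (2 * σt / θ + ρ * θ / 2) := by ring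

/-- Quadratic-form error of the finite-difference Hessian estimate. If
`‖g⁰ − ∇f(x)‖ ≤ σ̃`, `‖gᵢ − ∇f(x + θeᵢ)‖ ≤ σ̃`, and `H` has `i`-th column
`(gᵢ − g⁰)/θ`, then `|⟨h, Hh⟩ − ⟨h, ∇²f(x)h⟩| ≤ √d ‖h‖² (2σ̃/θ + ρθ/2)`. -/
theorem stmt15 (d : ℕ) (ρ θ σt : ℝ) (hθ : 0 < θ) (hσt : 0 ≤ σt)
    (f : EuclideanSpace ℝ (Fin d) → ℝ) (hf : ContDiff ℝ 2 f)
    (hlip : ∀ x y : EuclideanSpace ℝ (Fin d),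
      ‖fderiv ℝ (gradient f) x - fderiv ℝ (gradient f) y‖ ≤ ρ * ‖x - y‖)
    (x : EuclideanSpace ℝ (Fin d))
    (g0 : EuclideanSpace ℝ (Fin d)) (g : Fin d → EuclideanSpace ℝ (Fin d))
    (hg0 : ‖g0 - gradient f x‖ ≤ σt)
    (hg : ∀ i : Fin d, ‖g i - gradient f (x + θ • EuclideanSpace.single i 1)‖ ≤ σt)
    (H : Matrix (Fin d) (Fin d) ℝ)
    (hH : ∀ i j : Fin d, H j i = (g i j - g0 j) / θ) :
    ∀ h : EuclideanSpace ℝ (Fin d),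
      |⟪h, (WithLp.toLp 2 (H.mulVec h) : EuclideanSpace ℝ (Fin d))⟫ -
          ⟪h, fderiv ℝ (gradient f) x h⟫| ≤
        Real.sqrt d * ‖h‖ ^ 2 * (2 * σt / θ + ρ * θ / 2) :=
  stmt15_general d ρ θ σt hθ f hf hlip x g0 g hg0 hg H hH
end
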